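/- Let X be a set, M a family of nonempty subsets of X with X ∈ M, and O a lower-Vietoris-type topology on M. Then (M,O) is connected, separable, pseudocompact (in the sense that every continuous map from (M,O) to a T₁ space is constant), and any intersection of open dense subsets of (M,O) is dense. -/
import Mathlib


def lminus {X : Type*} (M : Set (Set X)) (A : Set X) : Set (↥M) :=
  {m : ↥M | ((m : Set X) ∩ A).Nonempty}

def IsLowerVietorisType {X : Type*} (M : Set (Set X)) (O : TopologicalSpace ↥M) : Prop :=
  O = TopologicalSpace.generateFrom
    {s : Set ↥M | @IsOpen _ O s ∧ ∃ A : Set X, s = lminus M A}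

theorem stmt_11.{u, v} {X : Type*} (M : Set (Set X)) (hM : ∀ m ∈ M, m.Nonempty)
    (hX : Set.univ ∈ M)
    (O : TopologicalSpace ↥M) (hO : IsLowerVietorisType M O) :
    @ConnectedSpace ↥M O ∧ @TopologicalSpace.SeparableSpace ↥M O ∧
      (∀ (Y : Type u) (tY : TopologicalSpace Y), @T1Space Y tY →
        ∀ f : ↥M → Y, @Continuous _ _ O tY f → ∃ c : Y, ∀ m : ↥M, f m = c) ∧
      (∀ (ι : Type v) (G : ι → Set ↥M),
        (∀ i, @IsOpen _ O (G i) ∧ @Dense _ O (G i)) → @Dense _ O (⋂ i, G i)) := by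
  letI := O
  set x₀ : ↥M := ⟨Set.univ, hX⟩ with hx₀
  -- Key: every nonempty open set contains x₀
  have key : ∀ U : Set ↥M, IsOpen U → U.Nonempty → x₀ ∈ U := by
    intro U hU hne
    rw [IsLowerVietorisType] at hO
    have hU' : TopologicalSpace.GenerateOpen
        {s : Set ↥M | IsOpen s ∧ ∃ A : Set X, s = lminus M A} U := by
      have hU2 : O.IsOpen U := hU
      rw [hO] at hU2
      exact hU2
    clear hU
    induction hU' with
    | basic s hs =>
        obtain ⟨-, A, rfl⟩ := hs
        obtain ⟨m, hm⟩ := hne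
        obtain ⟨a, _, ha⟩ := hm
        exact ⟨a, Set.mem_univ a, ha⟩
    | univ => trivial
    | inter s t hs ht ihs iht =>
        obtain ⟨m, hms, hmt⟩ := hne
        exact ⟨ihs ⟨m, hms⟩, iht ⟨m, hmt⟩⟩
    | sUnion S hS ih =>
        obtain ⟨m, s, hsS, hms⟩ := hne
        exact ⟨s, hsS, ih s hsS ⟨m, hms⟩⟩
  have hdense : Dense ({x₀} : Set ↥M) := by
    rw [dense_iff_inter_open]
    intro U hU hne
    exact ⟨x₀, key U hU hne, rfl⟩
  haveI : Nonempty ↥M := ⟨x₀⟩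
  refine ⟨?_, ?_, ?_, ?_⟩
  · have hpre : IsPreconnected (Set.univ : Set ↥M) := by
      intro u v hu hv huv hune hvne
      obtain ⟨a, -, ha⟩ := hune
      obtain ⟨b, -, hb⟩ := hvne
      exact ⟨x₀, Set.mem_univ _, key u hu ⟨a, ha⟩, key v hv ⟨b, hb⟩⟩
    exact { toPreconnectedSpace := ⟨hpre⟩, toNonempty := ⟨x₀⟩ }
  · exact ⟨{x₀}, Set.countable_singleton _, hdense⟩
  · intro Y tY hT1 f hf
    refine ⟨f x₀, fun m => ?_⟩
    by_contra h
    have hU : IsOpen (f ⁻¹' {f x₀}ᶜ) := (isOpen_compl_singleton).preimage hf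
    have := key _ hU ⟨m, h⟩
    exact this rfl
  · intro ι G hG
    rw [dense_iff_inter_open]
    intro U hU hne
    exact ⟨x₀, key U hU hne, Set.mem_iInter.2 fun i =>
      key (G i) (hG i).1 ((hG i).2.nonempty)⟩
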